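/- arXiv:2204.12108 — 5 statements merged into one kernel-verified Lean document; each statement's English description precedes it below -/
import Mathlib

section
/- For every gravity vector g ∈ ℝ³ and arbitrary estimated values R̂_I ∈ ℝ^{3×3}, v̂, p̂_I, p̂_f, p̂_G ∈ ℝ³, the invariant-EKF error-propagation matrix A of the perfect augmented system satisfies A N = 0, where N is the constant 24×4 unobservable-direction matrix; consequently exp(δ A) N = N for every δ ∈ ℝ. -/
open Matrix

abbrev V3 := Fin 3 → ℝ
abbrev M3 := Matrix (Fin 3) (Fin 3) ℝ

/-- The cross-product (skew-symmetric) matrix `(a)_×`. -/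
def skew (a : V3) : M3 :=
  !![0, -a 2, a 1; a 2, 0, -a 0; -a 1, a 0, 0]

/-- Row/column index of the 24-dimensional right-invariant error
`(ξ_θ, ξ_v, ξ_p, ξ_pf, ξ_pG, ξ_θG, ξ_bg, ξ_ba)`: 8 blocks of 3. -/
abbrev Idx24 := Fin 8 × Fin 3

/-- 24×24 matrix from an 8×8 table of 3×3 blocks. -/
def bm8 (f : Fin 8 → Fin 8 → M3) : Matrix Idx24 Idx24 ℝ :=
  Matrix.of fun p q => f p.1 q.1 p.2 q.2

/-- The invariant-EKF error-propagation matrix `A` of the perfect augmented system. -/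
def Amat (g : V3) (RI : M3) (v pI pf pG : V3) : Matrix Idx24 Idx24 ℝ :=
  bm8 ![![0, 0, 0, 0, 0, 0, -RI, 0],
        ![skew g, 0, 0, 0, 0, 0, -(skew v * RI), -RI],
        ![0, 1, 0, 0, 0, 0, -(skew pI * RI), 0],
        ![0, 0, 0, 0, 0, 0, -(skew pf * RI), 0],
        ![0, 0, 0, 0, 0, 0, -(skew pG * RI), 0],
        ![0, 0, 0, 0, 0, 0, 0, 0],
        ![0, 0, 0, 0, 0, 0, 0, 0],
        ![0, 0, 0, 0, 0, 0, 0, 0]]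

/-- The constant 24×4 unobservable-direction matrix `N`: first column plus a 24×3 block. -/
def Nmat (g : V3) : Matrix Idx24 (Fin 1 ⊕ Fin 3) ℝ :=
  Matrix.of fun p j =>
    Sum.elim (fun _ => (![g, 0, 0, 0, 0, g, 0, 0] : Fin 8 → V3) p.1 p.2)
      (fun c => (![0, 0, 1, 1, 1, 0, 0, 0] : Fin 8 → M3) p.1 p.2 c) j

/-- A 2×24 measurement Jacobian `B ⬝ [f₀ ⋯ f₇]` from a 2×3 factor `B`
and an 8-tuple of 3×3 blocks. -/
def rowJac (B : Matrix (Fin 2) (Fin 3) ℝ) (f : Fin 8 → M3) : Matrix (Fin 2) Idx24 ℝ :=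
  Matrix.of fun r p => (B * f p.1) r p.2

/-!
The only nonzero block columns of `A` are those of `ξ_θ`, `ξ_v`, `ξ_bg` and `ξ_ba`. Every column
of `N` vanishes in the `ξ_v`, `ξ_bg` and `ξ_ba` blocks, and its `ξ_θ` block is `0` or `g`, which
`(g)_×` kills because `g × g = 0`; hence `A N = 0`. Then `(δA)ᵏ N = 0` for `k ≥ 1`, so only the
constant term of the exponential series survives: `exp(δA) N = N`.
-/

namespace Matrix

variable {𝕂 n m : Type*} [RCLike 𝕂] [Fintype n] [DecidableEq n]

attribute [local instance] Matrix.linftyOpNormedRing Matrix.linftyOpNormedAlgebra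

theorem exp_mul_eq_self_of_mul_eq_zero {X : Matrix n n 𝕂} {Y : Matrix n m 𝕂} (h : X * Y = 0) :
    NormedSpace.exp X * Y = Y := by
  have hterms :
      (fun k : ℕ => ((k.factorial : 𝕂)⁻¹ • X ^ k) * Y) = fun k => if k = 0 then Y else 0 := by
    funext k
    cases k with
    | zero => simp
    | succ k => simp [pow_succ, Matrix.mul_assoc, h]
  have hsum := (NormedSpace.exp_series_hasSum_exp' (𝕂 := 𝕂) X).map (addMonoidHomMulRight Y)
    (continuous_id.matrix_mul continuous_const)
  simp only [Function.comp_def, addMonoidHomMulRight_apply, hterms] at hsum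
  exact hsum.unique (hasSum_ite_eq 0 Y)

end Matrix

theorem skew_mulVec (a b : V3) : skew a *ᵥ b = a ⨯₃ b := by
  ext i
  fin_cases i <;> simp [skew, cross_apply, mulVec, dotProduct, Fin.sum_univ_three] <;> ring

theorem skew_mulVec_self (a : V3) : skew a *ᵥ a = 0 := by
  rw [skew_mulVec, cross_self]

theorem bm8_mulVec_uncurry (f : Fin 8 → Fin 8 → M3) (x : Fin 8 → V3) :
    bm8 f *ᵥ Function.uncurry x = Function.uncurry fun i => ∑ j, f i j *ᵥ x j := by
  ext ⟨i, k⟩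
  simp [bm8, mulVec, dotProduct, Fintype.sum_prod_type, Finset.sum_apply]

theorem Amat_mulVec_eq_zero {g : V3} (RI : M3) (v pI pf pG : V3) {x : Fin 8 → V3}
    (hθ : skew g *ᵥ x 0 = 0) (hv : x 1 = 0) (hbg : x 6 = 0) (hba : x 7 = 0) :
    Amat g RI v pI pf pG *ᵥ Function.uncurry x = 0 := by
  rw [Amat, bm8_mulVec_uncurry]
  ext ⟨i, k⟩
  fin_cases i <;> simp [Fin.sum_univ_eight, hθ, hv, hbg, hba]

/-- The propagation matrix of the perfect augmented system annihilates the
unobservable directions, hence the state transition fixes them. -/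
theorem Amat_annihilates_N (g : V3) (RI : M3) (v pI pf pG : V3) :
    Amat g RI v pI pf pG * Nmat g = 0 ∧
    ∀ δ : ℝ, NormedSpace.exp (δ • Amat g RI v pI pf pG) * Nmat g = Nmat g := by
  have hAN : Amat g RI v pI pf pG * Nmat g = 0 := by
    ext p (_ | c)
    · exact congrFun (Amat_mulVec_eq_zero (x := ![g, 0, 0, 0, 0, g, 0, 0]) RI v pI pf pG
        (skew_mulVec_self g) rfl rfl rfl) p
    · exact congrFun (Amat_mulVec_eq_zero
        (x := fun b r => (![0, 0, 1, 1, 1, 0, 0, 0] : Fin 8 → M3) b r c)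
        RI v pI pf pG (mulVec_zero _) rfl rfl rfl) p
  refine ⟨hAN, fun δ => Matrix.exp_mul_eq_self_of_mul_eq_zero ?_⟩
  rw [Matrix.smul_mul, hAN, smul_zero]
end

section
/- For every J ∈ ℝ^{2×3}, every R̂_I ∈ ℝ^{3×3}, and every g ∈ ℝ³, the invariant-EKF local-feature measurement Jacobian H_L = −J R̂_Iᵀ [0₃ 0₃ I₃ −I₃ 0₃ 0₃ 0₃ 0₃] of the perfect augmented system satisfies H_L N = 0, where N is the constant 24×4 unobservable-direction matrix; in particular this holds for all values of the linearization point. -/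
open Matrix

/-- The local-feature measurement Jacobian annihilates the unobservable directions,
for every linearization point. -/
theorem HL_annihilates_N (J : Matrix (Fin 2) (Fin 3) ℝ) (RI : M3) (g : V3) :
    rowJac (-(J * RIᵀ)) ![0, 0, 1, -1, 0, 0, 0, 0] * Nmat g = 0 := by
  ext r j
  rw [Matrix.mul_apply, Fintype.sum_prod_type]
  cases j with
  | inl k =>
    simp only [
      show (![0, 0, 1, -1, 0, 0, 0, 0] : Fin 8 → M3) 5 = 0 from rfl,
      show (![0, 0, 1, -1, 0, 0, 0, 0] : Fin 8 → M3) 6 = 0 from rfl,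
      show (![0, 0, 1, -1, 0, 0, 0, 0] : Fin 8 → M3) 7 = 0 from rfl,
      rowJac, Nmat, Matrix.of_apply, Sum.elim_inl, Fin.sum_univ_eight,
      Matrix.cons_val_zero, Matrix.cons_val_one, Matrix.head_cons,
      Matrix.cons_val_two, Matrix.tail_cons, Matrix.cons_val_three,
      Matrix.cons_val_four, Matrix.cons_val_fin_one, Matrix.mul_zero,
      Matrix.zero_apply, Pi.zero_apply, zero_mul, mul_zero,
      Finset.sum_const_zero, add_zero, zero_add, Matrix.zero_apply]
  | inr c =>
    simp only [
      show (![0, 0, 1, -1, 0, 0, 0, 0] : Fin 8 → M3) 5 = 0 from rfl,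
      show (![0, 0, 1, -1, 0, 0, 0, 0] : Fin 8 → M3) 6 = 0 from rfl,
      show (![0, 0, 1, -1, 0, 0, 0, 0] : Fin 8 → M3) 7 = 0 from rfl,
      rowJac, Nmat, Matrix.of_apply, Sum.elim_inr, Fin.sum_univ_eight,
      Matrix.cons_val_zero, Matrix.cons_val_one, Matrix.head_cons,
      Matrix.cons_val_two, Matrix.tail_cons, Matrix.cons_val_three,
      Matrix.cons_val_four, Matrix.cons_val_fin_one, Matrix.mul_zero,
      Matrix.mul_one, Matrix.mul_neg, Matrix.zero_apply, zero_mul, mul_zero,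
      Finset.sum_const_zero, add_zero, zero_add, Matrix.neg_apply,
      Matrix.one_apply, mul_ite, mul_one, mul_zero, Finset.sum_ite_eq',
      Finset.mem_univ, if_true, neg_mul]
    ring
end

section
/- For every J' ∈ ℝ^{2×3}, all R̂_I, R̂_G ∈ ℝ^{3×3}, every map-feature position p_F ∈ ℝ³, and every g ∈ ℝ³, the invariant-EKF map-feature measurement Jacobian H_G = −J' R̂_Iᵀ [−(R̂_G p_F)_× 0₃ I₃ 0₃ −I₃ (R̂_G p_F)_× 0₃ 0₃] of the perfect augmented system satisfies H_G N = 0, where N is the constant 24×4 unobservable-direction matrix; in particular this holds for all values of the linearization point. -/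
open Matrix

/-- The map-feature measurement Jacobian annihilates the unobservable directions,
for every linearization point. -/
theorem HG_annihilates_N (J' : Matrix (Fin 2) (Fin 3) ℝ) (RI RG : M3) (pF g : V3) :
    rowJac (-(J' * RIᵀ))
        ![-skew (RG *ᵥ pF), 0, 1, 0, -1, skew (RG *ᵥ pF), 0, 0] * Nmat g = 0 := by
  ext r j
  simp only [Matrix.mul_apply, rowJac, Nmat, Matrix.of_apply, Matrix.zero_apply]
  rw [Fintype.sum_prod_type]
  fin_cases j <;>
    simp [Fin.sum_univ_succ, Matrix.mul_apply, skew, Matrix.mulVec, dotProduct] <;> ring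
end

section
/- (Observability of the perfect augmented system with invariant EKF; containment part of Theorem 3.) Fix g, p_F ∈ ℝ³ and let T ∈ ℕ, δ₁, …, δ_T ∈ ℝ, and for each t ∈ {0, …, T} let R̂_{I,t}, R̂_{G,t} ∈ ℝ^{3×3}, v̂_t, p̂_{I,t}, p̂_{f,t}, p̂_{G,t} ∈ ℝ³ and J_t, J'_t ∈ ℝ^{2×3} be arbitrary. Define A_t as the error-propagation matrix with the step-t estimates, the state-transition matrix Φ_{t|0} = exp(δ_t A_t) ⋯ exp(δ₁ A₁) (with Φ_{0|0} = I), and the Jacobians H_{L,t} = −J_t R̂_{I,t}ᵀ [0₃ 0₃ I₃ −I₃ 0₃ 0₃ 0₃ 0₃] and H_{G,t} = −J'_t R̂_{I,t}ᵀ [−(R̂_{G,t} p_F)_× 0₃ I₃ 0₃ −I₃ (R̂_{G,t} p_F)_× 0₃ 0₃]. Then for every t, H_{L,t} Φ_{t|0} N = 0 and H_{G,t} Φ_{t|0} N = 0; that is, the columns of the constant matrix N lie in the right null space of every block row of the observability matrix, independently of the (possibly ever-changing) estimated state values. -/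
open Matrix

/-- The state-transition matrix `Φ_{t|0} = exp(δ_t A_t) ⋯ exp(δ₁ A₁)`, `Φ_{0|0} = I`. -/
noncomputable def Phi (δ : ℕ → ℝ) (As : ℕ → Matrix Idx24 Idx24 ℝ) :
    ℕ → Matrix Idx24 Idx24 ℝ
  | 0 => 1
  | t + 1 => NormedSpace.exp (δ (t + 1) • As (t + 1)) * Phi δ As t


def blockRow {ρ : Type*} (G : Fin 8 → Matrix ρ (Fin 3) ℝ) : Matrix ρ Idx24 ℝ :=
  of fun r p => G p.1 r p.2

theorem blockRow_mul_Nmat_eq_zero {ρ : Type*} (g : V3) (G : Fin 8 → Matrix ρ (Fin 3) ℝ)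
    (hθ : ∑ k, G k *ᵥ (![g, 0, 0, 0, 0, g, 0, 0] : Fin 8 → V3) k = 0)
    (hp : ∑ k, G k * (![0, 0, 1, 1, 1, 0, 0, 0] : Fin 8 → M3) k = 0) :
    blockRow G * Nmat g = 0 := by
  ext r (_ | c)
  · simpa [blockRow, Nmat, mul_apply, Fintype.sum_prod_type, mulVec, dotProduct]
      using congrFun hθ r
  · simpa [blockRow, Nmat, mul_apply, Fintype.sum_prod_type, Matrix.sum_apply]
      using congrFun (congrFun hp r) c

theorem bm8_mul_eq_zero {ι : Type*} (F : Fin 8 → Fin 8 → M3) (X : Matrix Idx24 ι ℝ)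
    (h : ∀ i, blockRow (F i) * X = 0) : bm8 F * X = 0 := by
  ext ⟨i, a⟩ j
  exact congrFun (congrFun (h i) a) j

theorem rowJac_eq_blockRow (B : Matrix (Fin 2) (Fin 3) ℝ) (f : Fin 8 → M3) :
    rowJac B f = blockRow fun k => B * f k := rfl

theorem Amat_mul_Nmat (g : V3) (RI : M3) (v pI pf pG : V3) :
    Amat g RI v pI pf pG * Nmat g = 0 := by
  refine bm8_mul_eq_zero _ _ fun i => blockRow_mul_Nmat_eq_zero _ _ ?_ ?_ <;>
    fin_cases i <;> simp [Fin.sum_univ_eight, skew_mulVec]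

theorem rowJac_HL_mul_Nmat (g : V3) (B : Matrix (Fin 2) (Fin 3) ℝ) :
    rowJac B ![0, 0, 1, -1, 0, 0, 0, 0] * Nmat g = 0 := by
  rw [rowJac_eq_blockRow]
  apply blockRow_mul_Nmat_eq_zero <;> simp [Fin.sum_univ_eight]

theorem rowJac_HG_mul_Nmat (g s : V3) (B : Matrix (Fin 2) (Fin 3) ℝ) :
    rowJac B ![-skew s, 0, 1, 0, -1, skew s, 0, 0] * Nmat g = 0 := by
  rw [rowJac_eq_blockRow]
  apply blockRow_mul_Nmat_eq_zero <;> simp [Fin.sum_univ_eight, neg_mulVec]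

section MatrixExp

-- `exp` on matrices only depends on the product topology; a norm inducing it is needed
-- just to know that the exponential series converges.
attribute [local instance] Matrix.linftyOpNormedRing Matrix.linftyOpNormedAlgebra

theorem Matrix.exp_mul_eq_self_of_mul_eq_zero_s8 {𝕂 m n : Type*} [RCLike 𝕂] [Fintype m]
    [DecidableEq m] [Fintype n] {M : Matrix m m 𝕂} {N : Matrix m n 𝕂} (h : M * N = 0) :
    NormedSpace.exp M * N = N := by
  have hterm : ∀ k : ℕ, ((k.factorial : 𝕂)⁻¹ • M ^ k) * N = if k = 0 then N else 0 := by
    rintro (_ | k)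
    · simp
    · rw [Matrix.smul_mul, pow_succ, Matrix.mul_assoc, h]
      simp
  have hsum := (NormedSpace.exp_series_hasSum_exp' (𝕂 := 𝕂) M).map
    (Matrix.addMonoidHomMulRight N) (Continuous.matrix_mul continuous_id continuous_const)
  simp only [Function.comp_def, Matrix.addMonoidHomMulRight_apply, hterm] at hsum
  exact hsum.unique (hasSum_ite_eq 0 N)

end MatrixExp

theorem Phi_mul_eq_self {n : Type*} [Fintype n] (δ : ℕ → ℝ) (As : ℕ → Matrix Idx24 Idx24 ℝ)
    {N : Matrix Idx24 n ℝ} (h : ∀ s, As s * N = 0) (t : ℕ) : Phi δ As t * N = N := by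
  induction t with
  | zero => exact Matrix.one_mul N
  | succ t ih =>
    rw [Phi, Matrix.mul_assoc, ih]
    exact Matrix.exp_mul_eq_self_of_mul_eq_zero_s8 (by rw [Matrix.smul_mul, h, smul_zero])

/-- Observability of the perfect augmented system with the invariant EKF: the columns of
the constant matrix N lie in the right null space of every block row of the
observability matrix, independently of the (ever-changing) estimated state values. -/
theorem perfect_invariant_observability (g pF : V3) (T : ℕ) (δ : ℕ → ℝ)
    (RI RG : ℕ → M3) (v pI pf pG : ℕ → V3) (J J' : ℕ → Matrix (Fin 2) (Fin 3) ℝ) :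
    ∀ t ≤ T,
      rowJac (-(J t * (RI t)ᵀ)) ![0, 0, 1, -1, 0, 0, 0, 0] *
          Phi δ (fun s => Amat g (RI s) (v s) (pI s) (pf s) (pG s)) t * Nmat g = 0 ∧
      rowJac (-(J' t * (RI t)ᵀ))
            ![-skew (RG t *ᵥ pF), 0, 1, 0, -1, skew (RG t *ᵥ pF), 0, 0] *
          Phi δ (fun s => Amat g (RI s) (v s) (pI s) (pf s) (pG s)) t * Nmat g = 0 := by
  intro t _
  have hΦ := Phi_mul_eq_self δ _ (fun s => Amat_mul_Nmat g (RI s) (v s) (pI s) (pf s) (pG s)) t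
  rw [Matrix.mul_assoc, hΦ, Matrix.mul_assoc, hΦ]
  exact ⟨rowJac_HL_mul_Nmat g _, rowJac_HG_mul_Nmat g _ _⟩
end

section
/- (Optimal observability-constrained Jacobian modification.) Let H be a real a×b matrix and N a real b×c matrix such that Nᵀ N is invertible. Define H* = H − H N (Nᵀ N)⁻¹ Nᵀ. Then H* N = 0, and H* is the unique minimizer of the Frobenius norm ‖K − H‖_F over all real a×b matrices K satisfying K N = 0; that is, for every K with K N = 0 one has ‖H* − H‖_F ≤ ‖K − H‖_F, with equality if and only if K = H*. -/
open Matrix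

/-- The Frobenius norm, `‖M‖_F = √(trace (Mᵀ M))`. -/
noncomputable def frobNorm {a b : ℕ} (M : Matrix (Fin a) (Fin b) ℝ) : ℝ :=
  Real.sqrt (Matrix.trace (Mᵀ * M))

lemma trace_tmul_self {a b : ℕ} (M : Matrix (Fin a) (Fin b) ℝ) :
    Matrix.trace (Mᵀ * M) = ∑ j, ∑ i, (M i j)^2 := by
  simp [Matrix.trace, Matrix.diag, Matrix.mul_apply, sq]

lemma trace_tmul_self_nonneg {a b : ℕ} (M : Matrix (Fin a) (Fin b) ℝ) :
    0 ≤ Matrix.trace (Mᵀ * M) := by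
  rw [trace_tmul_self]
  positivity

lemma trace_tmul_self_eq_zero {a b : ℕ} (M : Matrix (Fin a) (Fin b) ℝ)
    (h : Matrix.trace (Mᵀ * M) = 0) : M = 0 := by
  rw [trace_tmul_self] at h
  ext i j
  have h1 : ∀ j ∈ Finset.univ, (0:ℝ) ≤ ∑ i, (M i j)^2 := by
    intro j _; positivity
  have h2 := (Finset.sum_eq_zero_iff_of_nonneg h1).mp h j (Finset.mem_univ j)
  have h3 : ∀ i ∈ Finset.univ, (0:ℝ) ≤ (M i j)^2 := by intro i _; positivity
  have := (Finset.sum_eq_zero_iff_of_nonneg h3).mp h2 i (Finset.mem_univ i)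
  simpa [pow_eq_zero_iff] using this

/-- Optimal observability-constrained Jacobian modification:
`H* = H − H N (NᵀN)⁻¹ Nᵀ` satisfies `H* N = 0` and is the unique minimizer of
`‖K − H‖_F` over all `K` with `K N = 0`. -/
theorem oc_jacobian_optimal {a b c : ℕ} (H : Matrix (Fin a) (Fin b) ℝ)
    (N : Matrix (Fin b) (Fin c) ℝ) (hN : IsUnit (Nᵀ * N)) :
    (H - H * N * (Nᵀ * N)⁻¹ * Nᵀ) * N = 0 ∧
    ∀ K : Matrix (Fin a) (Fin b) ℝ, K * N = 0 →
      frobNorm (H - H * N * (Nᵀ * N)⁻¹ * Nᵀ - H) ≤ frobNorm (K - H) ∧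
      (frobNorm (H - H * N * (Nᵀ * N)⁻¹ * Nᵀ - H) = frobNorm (K - H) ↔
        K = H - H * N * (Nᵀ * N)⁻¹ * Nᵀ) := by
  have hdet : IsUnit (Nᵀ * N).det := (Matrix.isUnit_iff_isUnit_det _).mp hN
  have hinv : (Nᵀ * N)⁻¹ * (Nᵀ * N) = 1 := Matrix.nonsing_inv_mul _ hdet
  set P : Matrix (Fin b) (Fin b) ℝ := N * (Nᵀ * N)⁻¹ * Nᵀ with hP
  have hPt : Pᵀ = P := by
    rw [hP]
    simp [Matrix.transpose_mul, Matrix.transpose_nonsing_inv, Matrix.mul_assoc]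
  have hstar : (H - H * N * (Nᵀ * N)⁻¹ * Nᵀ) * N = 0 := by
    have : H * N * (Nᵀ * N)⁻¹ * Nᵀ * N = H * N := by
      rw [Matrix.mul_assoc (H * N * (Nᵀ * N)⁻¹), Matrix.mul_assoc (H * N), hinv,
        Matrix.mul_one]
    rw [Matrix.sub_mul, this, sub_self]
  refine ⟨hstar, fun K hK => ?_⟩
  set Hs := H - H * N * (Nᵀ * N)⁻¹ * Nᵀ with hHs
  have hHP : H * P = H * N * (Nᵀ * N)⁻¹ * Nᵀ := by
    rw [hP, ← Matrix.mul_assoc, ← Matrix.mul_assoc]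
  have hD1 : Hs - H = -(H * P) := by rw [hHs, hHP]; abel
  have hD2N : (K - Hs) * N = 0 := by rw [Matrix.sub_mul, hK, hstar, sub_self]
  have hD2P : (K - Hs) * P = 0 := by
    rw [hP, ← Matrix.mul_assoc, ← Matrix.mul_assoc, hD2N, Matrix.zero_mul, Matrix.zero_mul]
  have hcross : Matrix.trace ((Hs - H)ᵀ * (K - Hs)) = 0 := by
    rw [hD1]
    have h1 : (-(H * P))ᵀ * (K - Hs) = -(P * (Hᵀ * (K - Hs))) := by
      rw [Matrix.transpose_neg, Matrix.transpose_mul, hPt, Matrix.neg_mul, Matrix.mul_assoc]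
    rw [h1, Matrix.trace_neg, Matrix.trace_mul_comm, Matrix.mul_assoc, hD2P,
      Matrix.mul_zero, Matrix.trace_zero, neg_zero]
  have hcross' : Matrix.trace ((K - Hs)ᵀ * (Hs - H)) = 0 := by
    calc Matrix.trace ((K - Hs)ᵀ * (Hs - H))
        = Matrix.trace (((Hs - H)ᵀ * (K - Hs))ᵀ) := by
          rw [Matrix.transpose_mul, Matrix.transpose_transpose]
      _ = Matrix.trace ((Hs - H)ᵀ * (K - Hs)) := Matrix.trace_transpose _
      _ = 0 := hcross
  have hdecomp : K - H = (K - Hs) + (Hs - H) := by abel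
  have hpyth : Matrix.trace ((K - H)ᵀ * (K - H)) =
      Matrix.trace ((K - Hs)ᵀ * (K - Hs)) + Matrix.trace ((Hs - H)ᵀ * (Hs - H)) := by
    rw [hdecomp, Matrix.transpose_add, Matrix.add_mul, Matrix.mul_add, Matrix.mul_add,
      Matrix.trace_add, Matrix.trace_add, Matrix.trace_add, hcross, hcross']
    ring
  have h2nn := trace_tmul_self_nonneg (K - Hs)
  have h1nn := trace_tmul_self_nonneg (Hs - H)
  have h3nn := trace_tmul_self_nonneg (K - H)
  have hle : Matrix.trace ((Hs - H)ᵀ * (Hs - H)) ≤ Matrix.trace ((K - H)ᵀ * (K - H)) := by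
    rw [hpyth]; linarith
  refine ⟨Real.sqrt_le_sqrt hle, ?_, ?_⟩
  · intro heq
    have h1 : Real.sqrt (Matrix.trace ((Hs - H)ᵀ * (Hs - H))) =
        Real.sqrt (Matrix.trace ((K - H)ᵀ * (K - H))) := heq
    have heq2 : Matrix.trace ((Hs - H)ᵀ * (Hs - H)) = Matrix.trace ((K - H)ᵀ * (K - H)) := by
      rw [← Real.sq_sqrt h1nn, ← Real.sq_sqrt h3nn, h1]
    have hz : Matrix.trace ((K - Hs)ᵀ * (K - Hs)) = 0 := by rw [hpyth] at heq2; linarith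
    exact sub_eq_zero.mp (trace_tmul_self_eq_zero _ hz)
  · intro h; rw [h]
end
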